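/- arXiv:1805.01878 — 4 statements merged into one kernel-verified Lean document; each statement's English description precedes it below -/
import Mathlib

section
/- For each fixed cut-off value u_c in (0,1) and each KPP reaction function f, the propagation speed of a permanent form travelling wave solution with cut-off u_c is unique: if (v₁, U₁) and (v₂, U₂) are both permanent form travelling wave solutions with cut-off u_c and speeds v₁ ≥ 0 and v₂ ≥ 0 respectively, then v₁ = v₂. -/
open Real Filter Topology

/-- A KPP reaction function: `f ∈ C¹`, `f 0 = f 1 = 0`, `f' 0 = 1`, `f' 1 < 0`,
`0 < f u ≤ u` on `(0,1)` and `f u < 0` for `u > 1`. -/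
def IsKPP (f : ℝ → ℝ) : Prop :=
  ContDiff ℝ 1 f ∧ f 0 = 0 ∧ f 1 = 0 ∧ deriv f 0 = 1 ∧ deriv f 1 < 0 ∧
  (∀ u : ℝ, 0 < u → u < 1 → 0 < f u ∧ f u ≤ u) ∧
  (∀ u : ℝ, 1 < u → f u < 0)

/-- The cut-off reaction function: `f_c u = f u` for `u > u_c`, and `0` for `u ≤ u_c`. -/
noncomputable def cutoff (f : ℝ → ℝ) (uc : ℝ) : ℝ → ℝ :=
  fun u => if uc < u then f u else 0

/-- A permanent form travelling wave solution with cut-off `uc` and speed `v`. -/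
def IsPTW (f : ℝ → ℝ) (uc v : ℝ) (U : ℝ → ℝ) : Prop :=
  ContDiff ℝ 1 U ∧
  (∀ y : ℝ, y ≠ 0 → ContDiffAt ℝ 2 U y) ∧
  (∀ y : ℝ, y ≠ 0 → deriv (deriv U) y + v * deriv U y + cutoff f uc (U y) = 0) ∧
  U 0 = uc ∧
  (∀ y : ℝ, y < 0 → uc ≤ U y ∧ U y ≤ 1) ∧
  (∀ y : ℝ, 0 < y → 0 ≤ U y ∧ U y ≤ uc) ∧
  Tendsto U atBot (𝓝 1) ∧
  Tendsto U atTop (𝓝 0)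

/-!
On `y > 0` the cut-off reaction vanishes, so `U' + vU` is constant there and `U → 0` forces
`U'(0) = -v u_c`. On `y < 0`, `U < 1` by uniqueness for the ODE at the rest state `(1, 0)`, and
`e^{vy} U'` is antitone; together with `U → 1` at `-∞` this makes `U` strictly decreasing, so the
front is a graph `U' = p(U)` over `[u_c, 1)` in the phase plane, with `(p²/2)' = -v p - f` and
`p(u_c) = -v u_c`.

For speeds `v₂ < v₁` the difference `D = p₁²/2 - p₂²/2` is positive at `u_c`, and wherever
`D > 0` we have `p₁ < p₂ < 0`, hence `D' = v₂ p₂ - v₁ p₁ > 0`. So `D` stays above a positive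
constant as `u → 1`: the faster wave keeps a slope bounded away from `0` on a half-line, which is
incompatible with `U₁ ≤ 1`.
-/

open Set Function

theorem eq_zero_of_tendsto_deriv_atTop {U : ℝ → ℝ} {L K : ℝ} (hU : Differentiable ℝ U)
    (hL : Tendsto U atTop (𝓝 L)) (hK : Tendsto (deriv U) atTop (𝓝 K)) : K = 0 := by
  have hslope : ∀ y, ∃ ξ ∈ Ioo y (y + 1), deriv U ξ = U (y + 1) - U y := fun y => by
    simpa using exists_deriv_eq_slope U (lt_add_one y) hU.continuous.continuousOn
      hU.differentiableOn
  choose ξ hξ hξU using hslope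
  have hξ_top : Tendsto ξ atTop atTop := tendsto_atTop_mono (fun y => (hξ y).1.le) tendsto_id
  refine tendsto_nhds_unique (hK.comp hξ_top) ?_
  simpa [comp_def, hξU] using (hL.comp (tendsto_atTop_add_const_right _ 1 tendsto_id)).sub hL

theorem surjOn_Ico_of_tendsto_atBot {U : ℝ → ℝ} {c L : ℝ} (hU : ContinuousOn U (Iic c))
    (hL : Tendsto U atBot (𝓝 L)) : SurjOn U (Iic c) (Ico (U c) L) := by
  rintro u ⟨hcu, huL⟩
  obtain ⟨z, hzu, hzc⟩ := ((hL.eventually (lt_mem_nhds huL)).and (eventually_le_atBot c)).exists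
  obtain ⟨y, hy, rfl⟩ := intermediate_value_Icc' hzc (hU.mono Icc_subset_Iic_self) ⟨hcu, hzu.le⟩
  exact ⟨y, hy.2, rfl⟩

theorem StrictAntiOn.continuousOn_invFunOn_Iic {U : ℝ → ℝ} {c : ℝ} {t : Set ℝ}
    (hU : StrictAntiOn U (Iic c)) (ht : SurjOn U (Iic c) t) :
    ContinuousOn (invFunOn U (Iic c)) t := by
  intro u hu
  have hY : ∀ x ∈ t, invFunOn U (Iic c) x ∈ Iic c ∧ U (invFunOn U (Iic c) x) = x :=
    fun x hx => invFunOn_pos (ht hx)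
  obtain ⟨hYu, hUYu⟩ := hY u hu
  refine tendsto_order.2 ⟨fun a ha => ?_, fun b hb => ?_⟩
  · have ha' : a ∈ Iic c := ha.le.trans hYu
    have hua : u < U a := hUYu ▸ hU ha' hYu ha
    filter_upwards [self_mem_nhdsWithin, nhdsWithin_le_nhds (gt_mem_nhds hua)] with x hx hxa
    exact (hU.lt_iff_gt (hY x hx).1 ha').1 ((hY x hx).2.symm ▸ hxa)
  · rcases le_or_gt b c with hbc | hbc
    · have hub : U b < u := hUYu ▸ hU hYu hbc hb
      filter_upwards [self_mem_nhdsWithin, nhdsWithin_le_nhds (lt_mem_nhds hub)] with x hx hxb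
      exact (hU.lt_iff_gt hbc (hY x hx).1).1 ((hY x hx).2.symm ▸ hxb)
    · exact eventually_nhdsWithin_of_forall fun x hx => (hY x hx).1.trans_lt hbc

theorem IsKPP.cutoff_nonneg {f : ℝ → ℝ} (hf : IsKPP f) {uc u : ℝ} (huc : 0 ≤ uc) (hu : u ≤ 1) :
    0 ≤ cutoff f uc u := by
  have ⟨_, _, hf₁, _, _, hpos, _⟩ := hf
  unfold cutoff
  split_ifs with hlt
  · rcases hu.lt_or_eq with hu | rfl
    · exact (hpos u (huc.trans_lt hlt) hu).1.le
    · exact hf₁.ge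
  · exact le_rfl

noncomputable def phaseTrajectory (U : ℝ → ℝ) (u : ℝ) : ℝ :=
  deriv U (invFunOn U (Iic 0) u)

namespace IsPTW

variable {f : ℝ → ℝ} {uc v : ℝ} {U : ℝ → ℝ}

theorem differentiable (h : IsPTW f uc v U) : Differentiable ℝ U :=
  h.1.differentiable one_ne_zero

theorem continuous_deriv (h : IsPTW f uc v U) : Continuous (deriv U) :=
  h.1.continuous_deriv le_rfl

theorem hasDerivAt_deriv (h : IsPTW f uc v U) {y : ℝ} (hy : y ≠ 0) :
    HasDerivAt (deriv U) (deriv (deriv U) y) y :=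
  (((h.2.1 y hy).derivWithin (m := 1) le_rfl).differentiableAt one_ne_zero).hasDerivAt

theorem deriv_deriv (h : IsPTW f uc v U) {y : ℝ} (hy : y ≠ 0) :
    deriv (deriv U) y = -(v * deriv U y) - cutoff f uc (U y) := by
  linarith [h.2.2.1 y hy]

theorem le_one (h : IsPTW f uc v U) (huc : uc < 1) (y : ℝ) : U y ≤ 1 := by
  obtain ⟨-, -, -, h0, hneg, hpos, -⟩ := h
  rcases lt_trichotomy y 0 with hy | rfl | hy
  · exact (hneg y hy).2
  · exact h0 ▸ huc.le
  · exact (hpos y hy).2.trans huc.le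

theorem deriv_zero (h : IsPTW f uc v U) : deriv U 0 = -(v * uc) := by
  have ⟨_, _, _, h0, _, hpos, _, htop⟩ := h
  have hK : ∀ y ≥ 0, deriv U y + v * U y = deriv U 0 + v * uc := by
    intro y hy
    rcases hy.eq_or_lt with rfl | hy
    · rw [h0]
    obtain ⟨c, -, hc⟩ := exists_hasDerivAt_eq_slope (fun y => deriv U y + v * U y) (fun _ => 0) hy
      (h.continuous_deriv.add (continuous_const.mul h.differentiable.continuous)).continuousOn
      fun x hx => ((h.hasDerivAt_deriv hx.1.ne').add
        ((h.differentiable x).hasDerivAt.const_mul v)).congr_deriv (by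
          rw [h.deriv_deriv hx.1.ne', cutoff, if_neg (hpos x hx.1).2.not_gt]
          ring)
    rwa [eq_comm, div_eq_zero_iff, sub_eq_zero, sub_zero, or_iff_left hy.ne', h0] at hc
  have hK_lim : Tendsto (deriv U) atTop (𝓝 (deriv U 0 + v * uc)) := by
    have : Tendsto (fun y => deriv U 0 + v * uc - v * U y) atTop (𝓝 (deriv U 0 + v * uc)) := by
      simpa using tendsto_const_nhds.sub (htop.const_mul v)
    refine this.congr' ?_
    filter_upwards [eventually_ge_atTop 0] with y hy
    linarith [hK y hy]
  linarith [eq_zero_of_tendsto_deriv_atTop h.differentiable htop hK_lim]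

theorem eventually_eq_one (h : IsPTW f uc v U) (hf : ContDiff ℝ 1 f) (hf₁ : f 1 = 0)
    (huc : uc < 1) {y : ℝ} (hy : y < 0) (hUy : U y = 1) : ∀ᶠ z in 𝓝 y, U z = 1 := by
  set F : ℝ × ℝ → ℝ × ℝ := fun z => (z.2, -(v * z.2) - f z.1)
  have hF : ContDiff ℝ 1 F := contDiff_snd.prodMk
    ((contDiff_const.mul contDiff_snd).neg.sub (hf.comp contDiff_fst))
  obtain ⟨K, s, hs, hFs⟩ := (hF.contDiffAt (x := (1, 0))).exists_lipschitzOnWith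
  have hdy : deriv U y = 0 :=
    IsLocalMax.deriv_eq_zero (Eventually.of_forall fun z => hUy ▸ h.le_one huc z)
  have hphase : Tendsto (fun z => (U z, deriv U z)) (𝓝 y) (𝓝 (1, 0)) := by
    simpa [hUy, hdy] using (h.differentiable.continuous.prodMk h.continuous_deriv).tendsto y
  have hnear : ∀ᶠ z in 𝓝 y, z < 0 ∧ uc < U z ∧ (U z, deriv U z) ∈ s :=
    (gt_mem_nhds hy).and ((h.differentiable.continuous.tendsto y).eventually
      (lt_mem_nhds (hUy ▸ huc)) |>.and (hphase hs))
  have hsol := ODE_solution_unique_of_eventually (t₀ := y) (v := fun _ => F) (s := fun _ => s)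
    (f := fun z => (U z, deriv U z)) (g := fun _ => ((1 : ℝ), (0 : ℝ)))
    (Eventually.of_forall fun _ => hFs) ?_
    (Eventually.of_forall fun _ => ⟨(hasDerivAt_const _ _).congr_deriv
      (by simp [F, hf₁, Prod.mk_zero_zero]), mem_of_mem_nhds hs⟩) (by simp [hUy, hdy])
  · filter_upwards [hsol] with z hz using congrArg Prod.fst hz
  · filter_upwards [hnear] with z ⟨hz0, hzuc, hzs⟩
    refine ⟨((h.differentiable z).hasDerivAt.prodMk (h.hasDerivAt_deriv hz0.ne)).congr_deriv ?_,
      hzs⟩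
    rw [h.deriv_deriv hz0.ne, cutoff, if_pos hzuc]

theorem lt_one (h : IsPTW f uc v U) (hf : ContDiff ℝ 1 f) (hf₁ : f 1 = 0) (huc : uc < 1)
    (y : ℝ) : U y < 1 := by
  have ⟨_, _, _, h0, _, hpos, _⟩ := h
  by_contra! hy
  have hUy : U y = 1 := (h.le_one huc y).antisymm hy
  have hy0 : y < 0 := by
    by_contra! hy0
    rcases hy0.eq_or_lt with rfl | hy0
    · exact huc.ne (h0 ▸ hUy)
    · linarith [(hpos y hy0).2]
  -- the points near which `U ≡ 1` form a clopen subset of `(-∞, 0)`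
  have hclosed : IsClosed {z | U z = 1} := isClosed_eq h.differentiable.continuous continuous_const
  have hsub : Iio 0 ⊆ {z | ∀ᶠ w in 𝓝 z, U w = 1} :=
    isPreconnected_Iio.subset_of_closure_inter_subset isOpen_setOfPred_eventually_nhds
      ⟨y, hy0, h.eventually_eq_one hf hf₁ huc hy0 hUy⟩ fun z ⟨hz, hz0⟩ =>
        h.eventually_eq_one hf hf₁ huc hz0
          (closure_minimal (fun w hw => hw.self_of_nhds) hclosed hz)
  have h0' : (0 : ℝ) ∈ {z | U z = 1} :=
    hclosed.closure_subset_iff.2 (fun z hz => (hsub hz).self_of_nhds)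
      (closure_Iio (0 : ℝ) ▸ self_mem_Iic)
  exact huc.ne (h0 ▸ h0')

theorem deriv_neg (h : IsPTW f uc v U) (hf : IsKPP f) (huc : uc ∈ Ioo 0 1) {y₀ : ℝ}
    (hy₀ : y₀ ≤ 0) : deriv U y₀ < 0 := by
  have ⟨_, _, _, _, hneg, _, hbot, _⟩ := h
  have hanti : AntitoneOn (fun y => exp (v * y) * deriv U y) (Iic 0) := by
    have hderiv : ∀ y < 0, HasDerivAt (fun y => exp (v * y) * deriv U y)
        (-(exp (v * y) * cutoff f uc (U y))) y := fun y hy =>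
      ((((hasDerivAt_id y).const_mul v).exp).mul (h.hasDerivAt_deriv hy.ne)).congr_deriv (by
        rw [h.deriv_deriv hy.ne]; simp only [id]; ring)
    refine antitoneOn_of_deriv_nonpos (convex_Iic 0) (by fun_prop)
      (fun y hy => (hderiv y (interior_Iic.subset hy)).differentiableAt.differentiableWithinAt)
      fun y hy => ?_
    rw [interior_Iic] at hy
    rw [(hderiv y hy).deriv, neg_nonpos]
    exact mul_nonneg (exp_pos _).le (hf.cutoff_nonneg huc.1.le (hneg y hy).2)
  by_contra! hd
  have hmono : MonotoneOn U (Iic y₀) := by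
    refine monotoneOn_of_deriv_nonneg (convex_Iic y₀) h.differentiable.continuous.continuousOn
      h.differentiable.differentiableOn fun y hy => ?_
    rw [interior_Iic] at hy
    have := hanti (hy.le.trans hy₀) hy₀ hy.le
    exact nonneg_of_mul_nonneg_right ((mul_nonneg (exp_pos _).le hd).trans this) (exp_pos _)
  have : 1 ≤ U y₀ := le_of_tendsto hbot (by
    filter_upwards [eventually_le_atBot y₀] with y hy using hmono hy self_mem_Iic hy)
  exact this.not_gt (h.lt_one hf.1 hf.2.2.1 huc.2 y₀)

theorem strictAntiOn (h : IsPTW f uc v U) (hf : IsKPP f) (huc : uc ∈ Ioo 0 1) :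
    StrictAntiOn U (Iic 0) :=
  strictAntiOn_of_deriv_neg (convex_Iic 0) h.differentiable.continuous.continuousOn
    fun y hy => h.deriv_neg hf huc (interior_subset hy : y ∈ Iic 0)

theorem surjOn (h : IsPTW f uc v U) : SurjOn U (Iic 0) (Ico uc 1) := by
  have ⟨_, _, _, h0, _, _, hbot, _⟩ := h
  exact h0 ▸ surjOn_Ico_of_tendsto_atBot h.differentiable.continuous.continuousOn hbot

theorem phaseTrajectory_apply (h : IsPTW f uc v U) (hf : IsKPP f) (huc : uc ∈ Ioo 0 1) {y : ℝ}
    (hy : y ≤ 0) : phaseTrajectory U (U y) = deriv U y := by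
  rw [phaseTrajectory, (h.strictAntiOn hf huc).injOn.leftInvOn_invFunOn (mem_Iic.2 hy)]

theorem phaseTrajectory_uc (h : IsPTW f uc v U) (hf : IsKPP f) (huc : uc ∈ Ioo 0 1) :
    phaseTrajectory U uc = -(v * uc) := by
  have h0 : U 0 = uc := h.2.2.2.1
  rw [← h0, h.phaseTrajectory_apply hf huc le_rfl, h.deriv_zero, h0]

theorem phaseTrajectory_neg (h : IsPTW f uc v U) (hf : IsKPP f) (huc : uc ∈ Ioo 0 1) {u : ℝ}
    (hu : u ∈ Ico uc 1) : phaseTrajectory U u < 0 :=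
  h.deriv_neg hf huc (invFunOn_pos (h.surjOn hu)).1

theorem continuousWithinAt_phaseTrajectory (h : IsPTW f uc v U) (hf : IsKPP f)
    (huc : uc ∈ Ioo 0 1) : ContinuousWithinAt (phaseTrajectory U) (Ici uc) uc := by
  have hY := (h.strictAntiOn hf huc).continuousOn_invFunOn_Iic h.surjOn uc
    (left_mem_Ico.2 huc.2)
  exact h.continuous_deriv.continuousAt.comp_continuousWithinAt
    ((continuousWithinAt_Ico_iff_Ici huc.2).1 hY)

theorem hasDerivAt_phaseTrajectory_sq (h : IsPTW f uc v U) (hf : IsKPP f) (huc : uc ∈ Ioo 0 1)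
    {u : ℝ} (hu : u ∈ Ioo uc 1) :
    HasDerivAt (fun u => phaseTrajectory U u ^ 2 / 2) (-(v * phaseTrajectory U u) - f u) u := by
  have h0 : U 0 = uc := h.2.2.2.1
  set Y := invFunOn U (Iic 0)
  have hYspec : ∀ x ∈ Ico uc 1, Y x ∈ Iic 0 ∧ U (Y x) = x :=
    fun x hx => invFunOn_pos (h.surjOn hx)
  obtain ⟨hY0, hUY⟩ := hYspec u (Ioo_subset_Ico_self hu)
  have hYneg : Y u ≠ 0 := fun hY => hu.1.ne' (by rw [← hUY, hY, h0])
  have hYderiv : HasDerivAt Y (deriv U (Y u))⁻¹ u :=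
    HasDerivAt.of_local_left_inverse
      (((h.strictAntiOn hf huc).continuousOn_invFunOn_Iic h.surjOn).continuousAt
        (Ico_mem_nhds hu.1 hu.2))
      (h.differentiable _).hasDerivAt (h.deriv_neg hf huc hY0).ne
      (eventually_of_mem (Ico_mem_nhds hu.1 hu.2) fun x hx => (hYspec x hx).2)
  have := (((h.hasDerivAt_deriv hYneg).comp u hYderiv).pow 2).div_const 2
  refine this.congr_deriv ?_
  rw [show phaseTrajectory U u = deriv U (Y u) from rfl, comp_apply, h.deriv_deriv hYneg, hUY,
    cutoff, if_pos hu.1]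
  field_simp [(h.deriv_neg hf huc hY0).ne]
  ring

theorem exists_neg_lt_phaseTrajectory (h : IsPTW f uc v U) (hf : IsKPP f) (huc : uc ∈ Ioo 0 1)
    {a b : ℝ} (ha : a < 1) (hb : 0 < b) : ∃ u ∈ Ioo a 1, -b < phaseTrajectory U u := by
  have hbot : Tendsto U atBot (𝓝 1) := h.2.2.2.2.2.2.1
  by_contra! hle
  obtain ⟨y₁, hUy₁, hy₁⟩ :=
    ((hbot.eventually (lt_mem_nhds (max_lt ha huc.2))).and (eventually_le_atBot 0)).exists
  have hslope : ∀ y ∈ interior (Iic y₁), deriv U y ≤ -b := fun y hy => by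
    have hy : y ≤ y₁ := (interior_subset hy : y ∈ Iic y₁)
    rw [← h.phaseTrajectory_apply hf huc (hy.trans hy₁)]
    refine hle _ ⟨?_, h.lt_one hf.1 hf.2.2.1 huc.2 y⟩
    exact (le_max_left a uc).trans_lt
      (hUy₁.trans_le ((h.strictAntiOn hf huc).antitoneOn (hy.trans hy₁) hy₁ hy))
  have hy : y₁ - 2 / b ≤ y₁ := sub_le_self _ (by positivity)
  have := (convex_Iic y₁).image_sub_le_mul_sub_of_deriv_le
    h.differentiable.continuous.continuousOn h.differentiable.differentiableOn hslope
    (y₁ - 2 / b) hy y₁ self_mem_Iic hy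
  rw [sub_sub_cancel, neg_mul, mul_div_cancel₀ _ hb.ne'] at this
  linarith [h.le_one huc.2 (y₁ - 2 / b), le_max_right a uc, huc.1]

theorem speed_le {v₁ v₂ : ℝ} {U₁ U₂ : ℝ → ℝ} (hf : IsKPP f) (huc : uc ∈ Ioo 0 1)
    (h₁ : IsPTW f uc v₁ U₁) (h₂ : IsPTW f uc v₂ U₂) (hv₂ : 0 ≤ v₂) : v₁ ≤ v₂ := by
  by_contra! hlt
  set p₁ := phaseTrajectory U₁
  set p₂ := phaseTrajectory U₂
  set D : ℝ → ℝ := fun u => p₁ u ^ 2 / 2 - p₂ u ^ 2 / 2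
  have hD_uc : 0 < D uc := by
    simp only [D, p₁, p₂, h₁.phaseTrajectory_uc hf huc, h₂.phaseTrajectory_uc hf huc]
    nlinarith [mul_pos (mul_pos (sub_pos.2 hlt) (by linarith : 0 < v₁ + v₂)) (pow_pos huc.1 2)]
  obtain ⟨a, hDa, ha⟩ : ∃ a, 0 < D a ∧ a ∈ Ioo uc 1 := by
    have hD : ContinuousWithinAt D (Ioi uc) uc :=
      ((((h₁.continuousWithinAt_phaseTrajectory hf huc).pow 2).div_const 2).sub
        (((h₂.continuousWithinAt_phaseTrajectory hf huc).pow 2).div_const 2)).mono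
        Ioi_subset_Ici_self
    exact ((hD.eventually (lt_mem_nhds hD_uc)).and (Ioo_mem_nhdsGT huc.2)).exists
  have hD' : ∀ u ∈ Ioo uc 1, HasDerivAt D (v₂ * p₂ u - v₁ * p₁ u) u := fun u hu =>
    ((h₁.hasDerivAt_phaseTrajectory_sq hf huc hu).sub
      (h₂.hasDerivAt_phaseTrajectory_sq hf huc hu)).congr_deriv (by ring)
  -- `D` cannot return to the level `D a > 0`: there `p₁ < p₂ < 0`, so `D' > 0`
  have hD_ge : ∀ u ∈ Ioo a 1, D a ≤ D u := fun u hu => by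
    have hsub : Icc a u ⊆ Ioo uc 1 := Icc_subset_Ioo ha.1 hu.2
    refine image_le_of_deriv_right_lt_deriv_boundary' (f' := fun _ => 0) continuousOn_const
      (fun _ _ => hasDerivWithinAt_const _ _ _) le_rfl
      (fun x hx => (hD' x (hsub hx)).continuousAt.continuousWithinAt)
      (fun x hx => (hD' x (hsub (Ico_subset_Icc_self hx))).hasDerivWithinAt)
      (fun x hx hDx => ?_) ⟨hu.1.le, le_rfl⟩
    have hx : x ∈ Ico uc 1 := Ioo_subset_Ico_self (hsub (Ico_subset_Icc_self hx))
    have hp₁ : p₁ x < 0 := h₁.phaseTrajectory_neg hf huc hx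
    have hp₂ : p₂ x < 0 := h₂.phaseTrajectory_neg hf huc hx
    have hsq : p₂ x ^ 2 < p₁ x ^ 2 := by simp only [D] at hDa hDx; linarith
    have hlt₁₂ : p₁ x < p₂ x := by nlinarith
    nlinarith [mul_nonneg hv₂ (sub_nonneg.2 hlt₁₂.le), mul_pos (sub_pos.2 hlt) (neg_pos.2 hp₁)]
  obtain ⟨u, hu, hpu⟩ := h₁.exists_neg_lt_phaseTrajectory hf huc ha.2
    (Real.sqrt_pos.2 (by linarith : 0 < 2 * D a))
  have hsq : p₁ u ^ 2 < 2 * D a := by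
    have := sq_lt_sq' hpu ((h₁.phaseTrajectory_neg hf huc
      ⟨ha.1.le.trans hu.1.le, hu.2⟩).trans (Real.sqrt_pos.2 (by linarith)))
    rwa [Real.sq_sqrt (by linarith)] at this
  have hDu : D u ≤ p₁ u ^ 2 / 2 := by simp only [D]; linarith [sq_nonneg (p₂ u)]
  linarith [hD_ge u hu]

end IsPTW

/-- Uniqueness of the propagation speed of permanent form travelling waves. -/
theorem ptw_speed_unique (f : ℝ → ℝ) (hf : IsKPP f) (uc : ℝ) (huc : uc ∈ Set.Ioo (0:ℝ) 1)
    (v₁ v₂ : ℝ) (hv₁ : 0 ≤ v₁) (hv₂ : 0 ≤ v₂) (U₁ U₂ : ℝ → ℝ)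
    (h₁ : IsPTW f uc v₁ U₁) (h₂ : IsPTW f uc v₂ U₂) : v₁ = v₂ :=
  (IsPTW.speed_le hf huc h₁ h₂ hv₂).antisymm (IsPTW.speed_le hf huc h₂ h₁ hv₁)
end

section
/- For each KPP reaction function f, the propagation speed v*(u_c) tends to 0 as u_c → 1⁻. -/
/-!
For `y > 0` the wave solves `U'' + v U' = 0`, so `U' + v U` is constant there; since `U → 0`
and `U'` comes arbitrarily close to `0` at `+∞`, that constant is `0`, whence `U'(0) = -v u_c`.
For `y < 0` the energy `U'² / 2 + ∫_{u_c}^{U} f` has derivative `-v U'² ≤ 0`, and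
`∫_{u_c}^{U} f ≤ 1 - u_c`. Comparing its value `(v u_c)² / 2` at `0` with its values at points
near `-∞` where `U'` is small gives `(v u_c)² ≤ 2 (1 - u_c)`, i.e.
`v*(u_c) ≤ √(2 (1 - u_c)) / u_c → 0`.
-/

open Real Filter Topology Set

lemma ContinuousOn.eq_of_hasDerivAt_zero_Ioi {g : ℝ → ℝ} {a x : ℝ} (hg : ContinuousOn g (Ici a))
    (hg' : ∀ y, a < y → HasDerivAt g 0 y) (hx : a ≤ x) : g x = g a := by
  have hd : ∀ y ∈ interior (Ici a), HasDerivWithinAt g 0 (interior (Ici a)) y := fun y hy =>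
    (hg' y (by simpa using hy)).hasDerivWithinAt
  exact le_antisymm
    (antitoneOn_of_hasDerivWithinAt_nonpos (convex_Ici a) hg hd (fun _ _ => le_rfl)
      self_mem_Ici hx hx)
    (monotoneOn_of_hasDerivWithinAt_nonneg (convex_Ici a) hg hd (fun _ _ => le_rfl)
      self_mem_Ici hx hx)

lemma exists_deriv_eq_sub_add_one {U : ℝ → ℝ} (hU : Differentiable ℝ U) :
    ∃ ξ : ℝ → ℝ, (∀ x, ξ x ∈ Ioo x (x + 1)) ∧ ∀ x, deriv U (ξ x) = U (x + 1) - U x := by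
  have h (x : ℝ) : ∃ c ∈ Ioo x (x + 1), deriv U c = U (x + 1) - U x := by
    simpa using exists_deriv_eq_slope U (lt_add_one x) hU.continuous.continuousOn
      hU.differentiableOn
  choose ξ hξ hξU using h
  exact ⟨ξ, hξ, hξU⟩

lemma exists_tendsto_atTop_deriv_tendsto_zero {U : ℝ → ℝ} {L : ℝ} (hU : Differentiable ℝ U)
    (hL : Tendsto U atTop (𝓝 L)) :
    ∃ ξ : ℝ → ℝ, Tendsto ξ atTop atTop ∧ Tendsto (fun x => deriv U (ξ x)) atTop (𝓝 0) := by
  obtain ⟨ξ, hξ, hξU⟩ := exists_deriv_eq_sub_add_one hU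
  refine ⟨ξ, tendsto_atTop_mono (fun x => (hξ x).1.le) tendsto_id, ?_⟩
  simpa [hξU] using (hL.comp (tendsto_atTop_add_const_right _ 1 tendsto_id)).sub hL

lemma exists_tendsto_atBot_deriv_tendsto_zero {U : ℝ → ℝ} {L : ℝ} (hU : Differentiable ℝ U)
    (hL : Tendsto U atBot (𝓝 L)) :
    ∃ ξ : ℝ → ℝ, Tendsto ξ atBot atBot ∧ Tendsto (fun x => deriv U (ξ x)) atBot (𝓝 0) := by
  obtain ⟨ξ, hξ, hξU⟩ := exists_deriv_eq_sub_add_one hU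
  refine ⟨ξ, tendsto_atBot_mono (fun x => (hξ x).2.le)
    (tendsto_atBot_add_const_right _ 1 tendsto_id), ?_⟩
  simpa [hξU] using (hL.comp (tendsto_atBot_add_const_right _ 1 tendsto_id)).sub hL

section KPP

variable {f : ℝ → ℝ} {uc v : ℝ} {U : ℝ → ℝ}

lemma IsKPP.le_one (hf : IsKPP f) {t : ℝ} (ht0 : 0 < t) (ht1 : t ≤ 1) : f t ≤ 1 := by
  rcases ht1.lt_or_eq with ht1 | rfl
  · exact (hf.2.2.2.2.2.1 t ht0 ht1).2.trans ht1.le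
  · rw [hf.2.2.1]; exact zero_le_one

lemma IsKPP.integral_le_sub (hf : IsKPP f) (huc : 0 < uc) {x : ℝ} (hx : uc ≤ x) (hx1 : x ≤ 1) :
    ∫ t in uc..x, f t ≤ x - uc := by
  simpa using intervalIntegral.integral_mono_on hx (hf.1.continuous.intervalIntegrable _ _)
    (intervalIntegrable_const (μ := MeasureTheory.volume))
    fun t ht => hf.le_one (huc.trans_le ht.1) (ht.2.trans hx1)

lemma IsPTW.hasDerivAt_deriv_s7 (hU : IsPTW f uc v U) (y : ℝ) (hy : y ≠ 0) :
    HasDerivAt (deriv U) (deriv (deriv U) y) y :=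
  (((hU.2.1 y hy).derivWithin (m := 1) (by norm_num)).differentiableAt one_ne_zero).hasDerivAt

lemma IsPTW.deriv_zero_s7 (hU : IsPTW f uc v U) : deriv U 0 = -(v * uc) := by
  have hU'' := hU.hasDerivAt_deriv_s7
  obtain ⟨hC1, -, hode, hU0, -, hright, -, htop⟩ := hU
  set w : ℝ → ℝ := fun y => deriv U y + v * U y
  have hw' : ∀ y, 0 < y → HasDerivAt w 0 y := by
    intro y hy
    have hcut : cutoff f uc (U y) = 0 := if_neg (not_lt.2 (hright y hy).2)
    exact ((hU'' y hy.ne').add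
      ((hC1.differentiable one_ne_zero y).hasDerivAt.const_mul v)).congr_deriv
      (by linarith [hode y hy.ne'])
  have hw_cont : ContinuousOn w (Ici 0) :=
    (hC1.continuous_deriv_one.add (continuous_const.mul hC1.continuous)).continuousOn
  have hw_const : ∀ y, 0 ≤ y → w y = w 0 := fun y hy => hw_cont.eq_of_hasDerivAt_zero_Ioi hw' hy
  obtain ⟨ξ, hξ, hξU⟩ :=
    exists_tendsto_atTop_deriv_tendsto_zero (hC1.differentiable one_ne_zero) htop
  have hwξ : Tendsto (fun x => w (ξ x)) atTop (𝓝 0) := by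
    simpa using hξU.add ((htop.comp hξ).const_mul v)
  have hw0 : w 0 = 0 := tendsto_nhds_unique (tendsto_const_nhds.congr'
    ((hξ.eventually_ge_atTop 0).mono fun x hx => (hw_const _ hx).symm)) hwξ
  simp only [w, hU0] at hw0
  linarith

noncomputable def waveEnergy (f : ℝ → ℝ) (uc : ℝ) (U : ℝ → ℝ) (y : ℝ) : ℝ :=
  deriv U y ^ 2 / 2 + ∫ t in uc..U y, f t

lemma IsPTW.antitoneOn_waveEnergy (hf : Continuous f) (hv : 0 ≤ v) (hU : IsPTW f uc v U) :
    AntitoneOn (waveEnergy f uc U) (Iic 0) := by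
  have hU'' := hU.hasDerivAt_deriv_s7
  obtain ⟨hC1, -, hode, -, hleft, -⟩ := hU
  have hΦ (x : ℝ) : HasDerivAt (fun x => ∫ t in uc..x, f t) (f x) x :=
    (hf.integral_hasStrictDerivAt uc x).hasDerivAt
  have hE (y : ℝ) (hy : y < 0) : HasDerivAt (waveEnergy f uc U) (-(v * deriv U y ^ 2)) y := by
    -- at a point where `U = u_c` the cut-off differs from `f`, but there `U` has a minimum
    have hcut : deriv U y * (f (U y) - cutoff f uc (U y)) = 0 := by
      rcases (hleft y hy).1.lt_or_eq with hgt | heq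
      · simp [cutoff, hgt]
      · have hmin : IsLocalMin U y := by
          filter_upwards [Iio_mem_nhds hy] with z hz
          rw [← heq]; exact (hleft z hz).1
        simp [hmin.deriv_eq_zero]
    refine ((((hU'' y hy.ne).pow 2).div_const 2).add
      ((hΦ (U y)).comp y (hC1.differentiable one_ne_zero y).hasDerivAt)).congr_deriv ?_
    linear_combination deriv U y * hode y hy.ne + hcut
  refine antitoneOn_of_hasDerivWithinAt_nonpos (convex_Iic 0) ?_
    (fun y hy => (hE y (by simpa using hy)).hasDerivWithinAt)
    fun y _ => neg_nonpos.2 (mul_nonneg hv (sq_nonneg _))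
  exact (((hC1.continuous_deriv_one.pow 2).div_const 2).add
    ((continuous_iff_continuousAt.2 fun x => (hΦ x).continuousAt).comp hC1.continuous)).continuousOn

lemma IsPTW.speed_le_s7 (hf : IsKPP f) (huc : 0 < uc) (hv : 0 ≤ v) (hU : IsPTW f uc v U) :
    v ≤ √(2 * (1 - uc)) / uc := by
  have hE := hU.antitoneOn_waveEnergy hf.1.continuous hv
  have hU'0 := hU.deriv_zero_s7
  obtain ⟨hC1, -, -, hU0, hleft, -, hbot, -⟩ := hU
  obtain ⟨ξ, hξ, hξU⟩ :=
    exists_tendsto_atBot_deriv_tendsto_zero (hC1.differentiable one_ne_zero) hbot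
  have hbound : ∀ᶠ x in atBot, (v * uc) ^ 2 / 2 ≤ deriv U (ξ x) ^ 2 / 2 + (1 - uc) := by
    filter_upwards [hξ.eventually_lt_atBot 0] with x hx
    calc (v * uc) ^ 2 / 2 = waveEnergy f uc U 0 := by simp [waveEnergy, hU0, hU'0]
      _ ≤ waveEnergy f uc U (ξ x) := hE hx.le self_mem_Iic hx.le
      _ ≤ deriv U (ξ x) ^ 2 / 2 + (1 - uc) := by
        rw [waveEnergy]
        linarith [hf.integral_le_sub huc (hleft _ hx).1 (hleft _ hx).2, (hleft _ hx).2]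
  have hlim : Tendsto (fun x => deriv U (ξ x) ^ 2 / 2 + (1 - uc)) atBot (𝓝 (1 - uc)) := by
    simpa using ((hξU.pow 2).div_const 2).add_const (1 - uc)
  have hsq : (v * uc) ^ 2 ≤ 2 * (1 - uc) := by linarith [ge_of_tendsto hlim hbound]
  rw [le_div_iff₀ huc]
  exact (le_abs_self _).trans (Real.abs_le_sqrt hsq)

end KPP

/-- The propagation speed tends to `0` as the cut-off tends to `1⁻`. -/
theorem vstar_tendsto_zero (f : ℝ → ℝ) (hf : IsKPP f) (vstar : ℝ → ℝ)
    (hvstar : ∀ uc ∈ Set.Ioo (0:ℝ) 1, 0 ≤ vstar uc ∧ ∃ U : ℝ → ℝ, IsPTW f uc (vstar uc) U) :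
    Tendsto vstar (𝓝[<] (1:ℝ)) (𝓝 0) := by
  have hbound : ∀ᶠ uc in 𝓝[<] (1:ℝ), vstar uc ∈ Icc 0 (√(2 * (1 - uc)) / uc) := by
    filter_upwards [Ioo_mem_nhdsLT zero_lt_one] with uc huc
    obtain ⟨hv, U, hU⟩ := hvstar uc huc
    exact ⟨hv, hU.speed_le_s7 hf huc.1 hv⟩
  have hlim : Tendsto (fun uc : ℝ => √(2 * (1 - uc)) / uc) (𝓝[<] 1) (𝓝 0) := by
    have : ContinuousAt (fun uc : ℝ => √(2 * (1 - uc)) / uc) 1 := by fun_prop (disch := norm_num)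
    simpa using this.tendsto.mono_left nhdsWithin_le_nhds
  exact tendsto_of_tendsto_of_tendsto_of_le_of_le' tendsto_const_nhds hlim
    (hbound.mono fun _ h => h.1) (hbound.mono fun _ h => h.2)
end

section
/- Let u_c be in (0,1), let f be a KPP reaction function, and let U be a permanent form travelling wave solution with cut-off u_c and speed v > 0. Then U(y) = u_c e^{−v y} for all y ≥ 0. -/
open Real Filter Topology

/-! On `y > 0` the profile stays below `u_c`, so the reaction term is cut off and the equation is
the linear one `U'' + v U' = 0`. Hence `U' y = U' 0 * exp (-v y)`, and integrating,
`U y = u_c + (U' 0 / v) (1 - exp (-v y))`. Letting `y → ∞` and using `U → 0` forces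
`U' 0 = -v u_c`. -/

open Set

theorem eq_of_continuousOn_Ici_of_hasDerivAt_zero {g : ℝ → ℝ} {a x : ℝ}
    (hc : ContinuousOn g (Ici a)) (hd : ∀ y, a < y → HasDerivAt g 0 y) (hx : a ≤ x) :
    g x = g a := by
  rcases hx.eq_or_lt with rfl | hx
  · rfl
  obtain ⟨-, -, hslope⟩ := exists_hasDerivAt_eq_slope g (fun _ => 0) hx
    (hc.mono Icc_subset_Ici_self) (fun y hy => hd y hy.1)
  rw [eq_comm, div_eq_zero_iff, sub_eq_zero] at hslope
  exact hslope.resolve_right (sub_ne_zero.2 hx.ne')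

theorem eq_mul_exp_of_hasDerivAt_eq_neg_mul {p : ℝ → ℝ} {v y : ℝ}
    (hc : ContinuousOn p (Ici 0)) (hd : ∀ x, 0 < x → HasDerivAt p (-v * p x) x) (hy : 0 ≤ y) :
    p y = p 0 * exp (-v * y) := by
  have hconst : (fun x => p x * exp (v * x)) y = (fun x => p x * exp (v * x)) 0 := by
    have hexp : Continuous fun x => exp (v * x) := by fun_prop
    refine eq_of_continuousOn_Ici_of_hasDerivAt_zero (hc.mul hexp.continuousOn) (fun x hx => ?_) hy
    refine ((hd x hx).mul ((hasDerivAt_id' x).const_mul v).exp).congr_deriv ?_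
    ring
  simp only [mul_zero, exp_zero, mul_one] at hconst
  rw [← hconst, mul_assoc, ← exp_add, neg_mul, add_neg_cancel, exp_zero, mul_one]

theorem eq_add_mul_one_sub_exp_of_hasDerivAt {U : ℝ → ℝ} {c v y : ℝ} (hv : v ≠ 0)
    (hc : ContinuousOn U (Ici 0)) (hd : ∀ x, 0 < x → HasDerivAt U (c * exp (-v * x)) x)
    (hy : 0 ≤ y) : U y = U 0 + c / v * (1 - exp (-v * y)) := by
  have hconst : (fun x => U x + c / v * exp (-v * x)) y =
      (fun x => U x + c / v * exp (-v * x)) 0 := by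
    have hexp : Continuous fun x => c / v * exp (-v * x) := by fun_prop
    refine eq_of_continuousOn_Ici_of_hasDerivAt_zero (hc.add hexp.continuousOn) (fun x hx => ?_) hy
    refine ((hd x hx).add
      (((hasDerivAt_id' x).const_mul (-v)).exp.const_mul (c / v))).congr_deriv ?_
    field_simp
    ring
  simp only [mul_zero, exp_zero, mul_one] at hconst
  linear_combination hconst

theorem cutoff_of_le (f : ℝ → ℝ) {uc u : ℝ} (h : u ≤ uc) : cutoff f uc u = 0 :=
  if_neg h.not_gt

namespace IsPTW

variable {f : ℝ → ℝ} {uc v : ℝ} {U : ℝ → ℝ}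

theorem contDiff (hU : IsPTW f uc v U) : ContDiff ℝ 1 U := hU.1

theorem map_zero (hU : IsPTW f uc v U) : U 0 = uc := hU.2.2.2.1

theorem tendsto_atTop (hU : IsPTW f uc v U) : Tendsto U atTop (𝓝 0) := hU.2.2.2.2.2.2.2

theorem hasDerivAt_deriv_of_pos (hU : IsPTW f uc v U) {y : ℝ} (hy : 0 < y) :
    HasDerivAt (deriv U) (-v * deriv U y) y := by
  obtain ⟨-, hU2, hODE, -, -, hpos, -, -⟩ := hU
  have hdiff : DifferentiableAt ℝ (deriv U) y :=
    ((hU2 y hy.ne').derivWithin (m := 1) (by norm_num)).differentiableAt one_ne_zero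
  have h := hODE y hy.ne'
  rw [cutoff_of_le f (hpos y hy).2] at h
  exact hdiff.hasDerivAt.congr_deriv (by linarith)

theorem deriv_eq_mul_exp_of_nonneg (hU : IsPTW f uc v U) {y : ℝ} (hy : 0 ≤ y) :
    deriv U y = deriv U 0 * exp (-v * y) :=
  eq_mul_exp_of_hasDerivAt_eq_neg_mul hU.contDiff.continuous_deriv_one.continuousOn
    (fun _ => hU.hasDerivAt_deriv_of_pos) hy

theorem eq_add_mul_one_sub_exp_of_nonneg (hU : IsPTW f uc v U) (hv : v ≠ 0) {y : ℝ}
    (hy : 0 ≤ y) :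
    U y = uc + deriv U 0 / v * (1 - exp (-v * y)) := by
  rw [← hU.map_zero]
  refine eq_add_mul_one_sub_exp_of_hasDerivAt hv hU.contDiff.continuous.continuousOn
    (fun x hx => ?_) hy
  rw [← hU.deriv_eq_mul_exp_of_nonneg hx.le]
  exact (hU.contDiff.differentiable one_ne_zero x).hasDerivAt

end IsPTW

theorem ptw_exponential_tail_general (f : ℝ → ℝ) (uc : ℝ)
    (v : ℝ) (hv : 0 < v) (U : ℝ → ℝ) (hU : IsPTW f uc v U) :
    ∀ y : ℝ, 0 ≤ y → U y = uc * Real.exp (-v * y) := by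
  have hprofile : ∀ y, 0 ≤ y → U y = uc + deriv U 0 / v * (1 - exp (-v * y)) :=
    fun _ => hU.eq_add_mul_one_sub_exp_of_nonneg hv.ne'
  have hexp : Tendsto (fun y => exp (-v * y)) atTop (𝓝 0) :=
    tendsto_exp_atBot.comp (tendsto_id.const_mul_atTop_of_neg (neg_lt_zero.2 hv))
  have hlim : Tendsto U atTop (𝓝 (uc + deriv U 0 / v)) := by
    have := ((hexp.const_sub 1).const_mul (deriv U 0 / v)).const_add uc
    rw [sub_zero, mul_one] at this
    exact this.congr' (eventually_ge_atTop 0 |>.mono fun y hy => (hprofile y hy).symm)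
  have hslope : deriv U 0 / v = -uc := by
    linarith [tendsto_nhds_unique hlim hU.tendsto_atTop]
  intro y hy
  rw [hprofile y hy, hslope]
  ring

/-- Ahead of the wave front, the PTW profile is the exponential `u_c * exp (-v y)`. -/
theorem ptw_exponential_tail (f : ℝ → ℝ) (hf : IsKPP f) (uc : ℝ) (huc : uc ∈ Set.Ioo (0:ℝ) 1)
    (v : ℝ) (hv : 0 < v) (U : ℝ → ℝ) (hU : IsPTW f uc v U) :
    ∀ y : ℝ, 0 ≤ y → U y = uc * Real.exp (-v * y) :=
  ptw_exponential_tail_general f uc v hv U hU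
end

section
/- Let u_c be in (0,1), let f be a KPP reaction function, let v ≥ 0, and let (α, β) : [0, ∞) → ℝ² be a solution of the planar system α' = β, β' = −vβ − f_c(α) with α(0) > 1 and β(0) > 0. Then α(y) > 1 and β(y) > 0 for all y ≥ 0; that is, the region D₋ = {(α, β) : α > 1, β > 0} is positively invariant for the system. -/
open Real Filter Topology

/-!
Let `s` be the first time the orbit leaves `D₋ = {α > 1, β > 0}`. On `[0, s)` we have
`β > 0`, so `α` increases and `α s > α 0 > 1`. Hence `f_c(α) = f(α) < 0` on `[0, s]`, and
`(β e^{v t})' = -f_c(α) e^{v t} > 0` there, so `β s > 0` as well: the orbit has not left `D₋`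
at time `s`, a contradiction.
-/

open Set

theorem exists_first_exit {E : Type*} [TopologicalSpace E] {γ : ℝ → E} {U : Set E} {a b : ℝ}
    (hU : IsOpen U) (hab : a ≤ b) (hγ : ContinuousOn γ (Icc a b)) (ha : γ a ∈ U)
    (hb : γ b ∉ U) :
    ∃ s ∈ Ioc a b, γ s ∉ U ∧ ∀ t ∈ Ico a s, γ t ∈ U := by
  have hclosed : IsClosed (Icc a b ∩ γ ⁻¹' Uᶜ) :=
    hγ.preimage_isClosed_of_isClosed isClosed_Icc hU.isClosed_compl
  obtain ⟨s, ⟨hs, hsU⟩, hleast⟩ :=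
    (isCompact_Icc.of_isClosed_subset hclosed inter_subset_left).exists_isLeast
      ⟨b, ⟨hab, le_rfl⟩, hb⟩
  refine ⟨s, ⟨hs.1.lt_of_ne fun h => hsU (h ▸ ha), hs.2⟩, hsU, fun t ht => ?_⟩
  by_contra htU
  exact (hleast ⟨⟨ht.1, ht.2.le.trans hs.2⟩, htU⟩).not_gt ht.2

theorem monotoneOn_mul_exp_of_hasDerivWithinAt {β g : ℝ → ℝ} {v a b : ℝ}
    (hβ : ∀ t ∈ Icc a b, HasDerivWithinAt β (-v * β t - g t) (Icc a b) t)
    (hg : ∀ t ∈ Ioo a b, g t ≤ 0) :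
    MonotoneOn (fun t => β t * exp (v * t)) (Icc a b) := by
  have hderiv : ∀ t ∈ Icc a b, HasDerivWithinAt (fun t => β t * exp (v * t))
      (-g t * exp (v * t)) (Icc a b) t := by
    intro t ht
    have hexp : HasDerivWithinAt (fun t => exp (v * t)) (exp (v * t) * v) (Icc a b) t := by
      simpa using ((hasDerivAt_id t).const_mul v).exp.hasDerivWithinAt
    exact ((hβ t ht).mul hexp).congr_deriv (by ring)
  apply monotoneOn_of_hasDerivWithinAt_nonneg (convex_Icc a b)
    (fun t ht => (hderiv t ht).continuousWithinAt)
  · rw [interior_Icc]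
    exact fun t ht => (hderiv t (Ioo_subset_Icc_self ht)).mono Ioo_subset_Icc_self
  · rw [interior_Icc]
    exact fun t ht => mul_nonneg (neg_nonneg.mpr (hg t ht)) (exp_pos _).le

theorem pos_of_hasDerivWithinAt_of_nonpos {β g : ℝ → ℝ} {v a b : ℝ} (hab : a ≤ b)
    (hβ : ∀ t ∈ Icc a b, HasDerivWithinAt β (-v * β t - g t) (Icc a b) t)
    (hg : ∀ t ∈ Ioo a b, g t ≤ 0) (ha : 0 < β a) : 0 < β b := by
  have hmono := monotoneOn_mul_exp_of_hasDerivWithinAt hβ hg ⟨le_rfl, hab⟩ ⟨hab, le_rfl⟩ hab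
  exact (mul_pos_iff_of_pos_right (exp_pos (v * b))).mp
    ((mul_pos ha (exp_pos (v * a))).trans_le hmono)

theorem IsKPP.cutoff_neg {f : ℝ → ℝ} (hf : IsKPP f) {uc u : ℝ} (huc : uc < 1) (hu : 1 < u) :
    cutoff f uc u < 0 := by
  rw [cutoff, if_pos (huc.trans hu)]
  exact hf.2.2.2.2.2.2 u hu

theorem Dminus_positively_invariant_general (f : ℝ → ℝ) (hf : IsKPP f) (uc : ℝ)
    (huc : uc ∈ Set.Ioo (0:ℝ) 1) (v : ℝ) (α β : ℝ → ℝ)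
    (hα : ∀ y ∈ Set.Ici (0:ℝ), HasDerivWithinAt α (β y) (Set.Ici 0) y)
    (hβ : ∀ y ∈ Set.Ici (0:ℝ),
      HasDerivWithinAt β (-v * β y - cutoff f uc (α y)) (Set.Ici 0) y)
    (h0α : 1 < α 0) (h0β : 0 < β 0) :
    ∀ y : ℝ, 0 ≤ y → 1 < α y ∧ 0 < β y := by
  intro y hy
  by_contra hleave
  have hαc : ContinuousOn α (Ici 0) := fun t ht => (hα t ht).continuousWithinAt
  have hβc : ContinuousOn β (Ici 0) := fun t ht => (hβ t ht).continuousWithinAt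
  obtain ⟨s, ⟨hs0, -⟩, hs_out, hs_in⟩ := exists_first_exit (U := Ioi 1 ×ˢ Ioi 0)
    (isOpen_Ioi.prod isOpen_Ioi) hy
    ((hαc.mono Icc_subset_Ici_self).prodMk (hβc.mono Icc_subset_Ici_self)) ⟨h0α, h0β⟩ hleave
  have hα_mono : StrictMonoOn α (Icc 0 s) :=
    strictMonoOn_of_hasDerivWithinAt_pos (convex_Icc 0 s) (hαc.mono Icc_subset_Ici_self)
      (by rw [interior_Icc]; exact fun t ht => (hα t ht.1.le).mono (fun r hr => hr.1.le))
      (by rw [interior_Icc]; exact fun t ht => (hs_in t ⟨ht.1.le, ht.2⟩).2)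
  have hα_gt : ∀ t ∈ Icc 0 s, 1 < α t := fun t ht =>
    h0α.trans_le (hα_mono.monotoneOn ⟨le_rfl, hs0.le⟩ ht ht.1)
  have hβs : 0 < β s := pos_of_hasDerivWithinAt_of_nonpos hs0.le
    (fun t ht => (hβ t ht.1).mono Icc_subset_Ici_self)
    (fun t ht => (hf.cutoff_neg huc.2 (hα_gt t (Ioo_subset_Icc_self ht))).le) h0β
  exact hs_out ⟨hα_gt s ⟨hs0.le, le_rfl⟩, hβs⟩

/-- The region `{(a, b) : a > 1, b > 0}` is positively invariant for the
planar system `a' = b`, `b' = -v b - f_c a`. -/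
theorem Dminus_positively_invariant (f : ℝ → ℝ) (hf : IsKPP f) (uc : ℝ)
    (huc : uc ∈ Set.Ioo (0:ℝ) 1) (v : ℝ) (hv : 0 ≤ v) (α β : ℝ → ℝ)
    (hα : ∀ y ∈ Set.Ici (0:ℝ), HasDerivWithinAt α (β y) (Set.Ici 0) y)
    (hβ : ∀ y ∈ Set.Ici (0:ℝ),
      HasDerivWithinAt β (-v * β y - cutoff f uc (α y)) (Set.Ici 0) y)
    (h0α : 1 < α 0) (h0β : 0 < β 0) :
    ∀ y : ℝ, 0 ≤ y → 1 < α y ∧ 0 < β y :=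
  Dminus_positively_invariant_general f hf uc huc v α β hα hβ h0α h0β
end
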